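/- arXiv:1205.3306 — 2 statements merged into one kernel-verified Lean document; each statement's English description precedes it below -/
import Mathlib

section
/- Let I ⊆ ℝ be an open interval, μ ∈ ℝ, and let R, Λ, Θ, U : I → ℝ be C² functions with R > 0, U > 0, R² = U² − μ², (R')² + (R²/(R² + μ²))·(Λ')² = 1, and Θ' = (μ/(R² + μ²))·Λ' on I. Define X(s,t) = (R(s)·cos(t − Θ(s)), R(s)·sin(t − Θ(s)), Λ(s) + μ·(t − Θ(s))), and assume X_s × X_t ≠ 0 on I × ℝ. Then the Gaussian curvature of X satisfies K(s,t) = −U''(s)/U(s) for all (s,t) ∈ I × ℝ. -/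
open Real

noncomputable section

/-- Euclidean dot product on `ℝ³ = ℝ × ℝ × ℝ`. -/
def dot3 (v w : ℝ × ℝ × ℝ) : ℝ := v.1 * w.1 + v.2.1 * w.2.1 + v.2.2 * w.2.2

/-- Cross product on `ℝ³ = ℝ × ℝ × ℝ`. -/
def cross3 (v w : ℝ × ℝ × ℝ) : ℝ × ℝ × ℝ :=
  (v.2.1 * w.2.2 - v.2.2 * w.2.1,
   v.2.2 * w.1 - v.1 * w.2.2,
   v.1 * w.2.1 - v.2.1 * w.1)

/-- The vertical unit vector `e₃ = (0,0,1)`. -/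
def e3 : ℝ × ℝ × ℝ := ((0 : ℝ), (0 : ℝ), (1 : ℝ))

/-- Partial derivative of a parametrized surface w.r.t. the first parameter. -/
def pd1 (X : ℝ → ℝ → ℝ × ℝ × ℝ) (s t : ℝ) : ℝ × ℝ × ℝ := deriv (fun u => X u t) s

/-- Partial derivative of a parametrized surface w.r.t. the second parameter. -/
def pd2 (X : ℝ → ℝ → ℝ × ℝ × ℝ) (s t : ℝ) : ℝ × ℝ × ℝ := deriv (fun v => X s v) t

/-- Unit normal `n = (X_s × X_t)/‖X_s × X_t‖`. -/
def unitNormal (X : ℝ → ℝ → ℝ × ℝ × ℝ) (s t : ℝ) : ℝ × ℝ × ℝ :=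
  (Real.sqrt (dot3 (cross3 (pd1 X s t) (pd2 X s t)) (cross3 (pd1 X s t) (pd2 X s t))))⁻¹ •
    cross3 (pd1 X s t) (pd2 X s t)

/-- Angle function `n₃ = n · e₃`. -/
def angleFun (X : ℝ → ℝ → ℝ × ℝ × ℝ) (s t : ℝ) : ℝ := dot3 (unitNormal X s t) e3

/-- Gaussian curvature `K = ((X_ss·n)(X_tt·n) − (X_st·n)²)/(EG − F²)`. -/
def gauss (X : ℝ → ℝ → ℝ × ℝ × ℝ) (s t : ℝ) : ℝ :=
  (dot3 (pd1 (pd1 X) s t) (unitNormal X s t) * dot3 (pd2 (pd2 X) s t) (unitNormal X s t)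
      - (dot3 (pd2 (pd1 X) s t) (unitNormal X s t)) ^ 2)
    / (dot3 (pd1 X s t) (pd1 X s t) * dot3 (pd2 X s t) (pd2 X s t)
        - (dot3 (pd1 X s t) (pd2 X s t)) ^ 2)

/-!
The hypotheses say that the first fundamental form of `X` is `ds² + U² dt²`: `E = 1`, `F = 0` and
`G = R² + μ² = U²`, so by Gauss' formula for geodesic coordinates `K = -(√G)''/√G = -U''/U`.
We verify this extrinsically. Every partial derivative of `X` up to order two is the rotation
about the `z`-axis by `t - Θ s` of a vector depending on `s` alone, and rotations preserve dot and
cross products, so `K` becomes a rational expression in `R, Λ, Θ, U` and their first two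
derivatives; it reduces to `-U''/U` modulo the hypotheses and their derivatives.
-/

open Filter Topology

section SecondDerivative

variable {f : ℝ → ℝ} {x : ℝ}

theorem ContDiffAt.eventually_differentiableAt (hf : ContDiffAt ℝ 2 f x) :
    ∀ᶠ y in 𝓝 x, DifferentiableAt ℝ f y :=
  (hf.eventually (by simp)).mono fun _ hy => hy.differentiableAt two_ne_zero

theorem ContDiffAt.hasDerivAt_deriv (hf : ContDiffAt ℝ 2 f x) :
    HasDerivAt (deriv f) (deriv (deriv f) x) x :=
  ((hf.derivWithin (m := 1) (by norm_num)).differentiableAt one_ne_zero).hasDerivAt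

end SecondDerivative

def rotZ (φ : ℝ) (v : ℝ × ℝ × ℝ) : ℝ × ℝ × ℝ :=
  (v.1 * cos φ - v.2.1 * sin φ, v.1 * sin φ + v.2.1 * cos φ, v.2.2)

theorem dot3_rotZ (φ : ℝ) (v w : ℝ × ℝ × ℝ) : dot3 (rotZ φ v) (rotZ φ w) = dot3 v w := by
  simp only [dot3, rotZ]
  linear_combination (v.1 * w.1 + v.2.1 * w.2.1) * cos_sq_add_sin_sq φ

theorem cross3_rotZ (φ : ℝ) (v w : ℝ × ℝ × ℝ) :
    cross3 (rotZ φ v) (rotZ φ w) = rotZ φ (cross3 v w) := by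
  simp only [cross3, rotZ, Prod.mk.injEq]
  refine ⟨by ring, by ring, ?_⟩
  linear_combination (v.1 * w.2.1 - v.2.1 * w.1) * cos_sq_add_sin_sq φ

theorem HasDerivAt.rotZ {φ f g h : ℝ → ℝ} {φ' f' g' h' x : ℝ} (hφ : HasDerivAt φ φ' x)
    (hf : HasDerivAt f f' x) (hg : HasDerivAt g g' x) (hh : HasDerivAt h h' x) :
    HasDerivAt (fun u => rotZ (φ u) (f u, g u, h u))
      (rotZ (φ x) (f' - φ' * g x, g' + φ' * f x, h')) x := by
  have h₁ := (hf.fun_mul hφ.cos).fun_sub (hg.fun_mul hφ.sin)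
  have h₂ := (hf.fun_mul hφ.sin).fun_add (hg.fun_mul hφ.cos)
  refine (h₁.prodMk (h₂.prodMk hh)).congr_deriv ?_
  simp only [_root_.rotZ, Prod.mk.injEq, and_true]
  constructor <;> ring

theorem dot3_smul_right (r : ℝ) (v w : ℝ × ℝ × ℝ) : dot3 v (r • w) = r * dot3 v w := by
  simp only [dot3, Prod.smul_fst, Prod.smul_snd, smul_eq_mul]
  ring

theorem dot3_cross3_self (v w : ℝ × ℝ × ℝ) :
    dot3 (cross3 v w) (cross3 v w) = dot3 v v * dot3 w w - dot3 v w ^ 2 := by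
  simp only [dot3, cross3]
  ring

theorem gauss_eq_cross3 (X : ℝ → ℝ → ℝ × ℝ × ℝ) (s t : ℝ) :
    gauss X s t =
      (dot3 (pd1 (pd1 X) s t) (cross3 (pd1 X s t) (pd2 X s t))
          * dot3 (pd2 (pd2 X) s t) (cross3 (pd1 X s t) (pd2 X s t))
        - dot3 (pd2 (pd1 X) s t) (cross3 (pd1 X s t) (pd2 X s t)) ^ 2)
      / dot3 (cross3 (pd1 X s t) (pd2 X s t)) (cross3 (pd1 X s t) (pd2 X s t)) ^ 2 := by
  simp only [gauss, unitNormal, dot3_smul_right, ← dot3_cross3_self]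
  generalize cross3 (pd1 X s t) (pd2 X s t) = N
  have hN : 0 ≤ dot3 N N :=
    add_nonneg (add_nonneg (mul_self_nonneg _) (mul_self_nonneg _)) (mul_self_nonneg _)
  have hsq : (√(dot3 N N))⁻¹ ^ 2 = (dot3 N N)⁻¹ := by rw [inv_pow, sq_sqrt hN]
  linear_combination (dot3 (pd1 (pd1 X) s t) N * dot3 (pd2 (pd2 X) s t) N
    - dot3 (pd2 (pd1 X) s t) N ^ 2) / dot3 N N * hsq

def bourPatch (μ : ℝ) (R Λ Θ : ℝ → ℝ) (s t : ℝ) : ℝ × ℝ × ℝ :=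
  rotZ (t - Θ s) (R s, 0, Λ s + μ * (t - Θ s))

section bourPatch

variable {μ : ℝ} {R Λ Θ : ℝ → ℝ} {s : ℝ}

theorem pd2_bourPatch (t : ℝ) : pd2 (bourPatch μ R Λ Θ) s t = rotZ (t - Θ s) (0, R s, μ) := by
  have hφ := (hasDerivAt_id' t).sub_const (Θ s)
  have h := hφ.rotZ (hasDerivAt_const t (R s)) (hasDerivAt_const t 0)
    ((hφ.const_mul μ).const_add (Λ s))
  exact h.deriv.trans (by simp)

theorem pd2_pd2_bourPatch (t : ℝ) :
    pd2 (pd2 (bourPatch μ R Λ Θ)) s t = rotZ (t - Θ s) (-R s, 0, 0) := by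
  have hφ := (hasDerivAt_id' t).sub_const (Θ s)
  have h := hφ.rotZ (hasDerivAt_const t 0) (hasDerivAt_const t (R s)) (hasDerivAt_const t μ)
  show deriv (fun v => pd2 (bourPatch μ R Λ Θ) s v) t = _
  simp [pd2_bourPatch, h.deriv]

theorem hasDerivAt_bourPatch_left {r' l' θ' : ℝ} (hR : HasDerivAt R r' s) (hΛ : HasDerivAt Λ l' s)
    (hΘ : HasDerivAt Θ θ' s) (t : ℝ) :
    HasDerivAt (fun u => bourPatch μ R Λ Θ u t)
      (rotZ (t - Θ s) (r', -(R s * θ'), l' - μ * θ')) s := by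
  have hφ := hΘ.const_sub t
  have h := hφ.rotZ hR (hasDerivAt_const s 0) (hΛ.add (hφ.const_mul μ))
  refine h.congr_deriv (congrArg _ ?_)
  simp only [Prod.mk.injEq]
  refine ⟨?_, ?_, ?_⟩ <;> ring

theorem pd1_bourPatch (hR : DifferentiableAt ℝ R s) (hΛ : DifferentiableAt ℝ Λ s)
    (hΘ : DifferentiableAt ℝ Θ s) (t : ℝ) :
    pd1 (bourPatch μ R Λ Θ) s t
      = rotZ (t - Θ s) (deriv R s, -(R s * deriv Θ s), deriv Λ s - μ * deriv Θ s) :=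
  (hasDerivAt_bourPatch_left hR.hasDerivAt hΛ.hasDerivAt hΘ.hasDerivAt t).deriv

theorem cross3_pd1_pd2_bourPatch (hR : DifferentiableAt ℝ R s) (hΛ : DifferentiableAt ℝ Λ s)
    (hΘ : DifferentiableAt ℝ Θ s) (t : ℝ) :
    cross3 (pd1 (bourPatch μ R Λ Θ) s t) (pd2 (bourPatch μ R Λ Θ) s t)
      = rotZ (t - Θ s) (-(R s * deriv Λ s), -(μ * deriv R s), R s * deriv R s) := by
  rw [pd1_bourPatch hR hΛ hΘ, pd2_bourPatch, cross3_rotZ]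
  congr 1
  simp only [cross3, Prod.mk.injEq]
  refine ⟨?_, ?_, ?_⟩ <;> ring

theorem pd2_pd1_bourPatch (hR : DifferentiableAt ℝ R s) (hΛ : DifferentiableAt ℝ Λ s)
    (hΘ : DifferentiableAt ℝ Θ s) (t : ℝ) :
    pd2 (pd1 (bourPatch μ R Λ Θ)) s t = rotZ (t - Θ s) (R s * deriv Θ s, deriv R s, 0) := by
  have hφ := (hasDerivAt_id' t).sub_const (Θ s)
  have h := hφ.rotZ (hasDerivAt_const t (deriv R s)) (hasDerivAt_const t (-(R s * deriv Θ s)))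
    (hasDerivAt_const t (deriv Λ s - μ * deriv Θ s))
  show deriv (fun v => pd1 (bourPatch μ R Λ Θ) s v) t = _
  simp [pd1_bourPatch hR hΛ hΘ, h.deriv]

theorem pd1_pd1_bourPatch (hR : ContDiffAt ℝ 2 R s) (hΛ : ContDiffAt ℝ 2 Λ s)
    (hΘ : ContDiffAt ℝ 2 Θ s) (t : ℝ) :
    pd1 (pd1 (bourPatch μ R Λ Θ)) s t = rotZ (t - Θ s)
      (deriv (deriv R) s - R s * deriv Θ s ^ 2,
        -(2 * deriv R s * deriv Θ s + R s * deriv (deriv Θ) s),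
        deriv (deriv Λ) s - μ * deriv (deriv Θ) s) := by
  have hpd1 : (fun u => pd1 (bourPatch μ R Λ Θ) u t) =ᶠ[𝓝 s] fun u =>
      rotZ (t - Θ u) (deriv R u, -(R u * deriv Θ u), deriv Λ u - μ * deriv Θ u) := by
    filter_upwards [hR.eventually_differentiableAt, hΛ.eventually_differentiableAt,
      hΘ.eventually_differentiableAt] with u hRu hΛu hΘu
    exact pd1_bourPatch hRu hΛu hΘu t
  have h := ((hΘ.differentiableAt two_ne_zero).hasDerivAt.const_sub t).rotZ hR.hasDerivAt_deriv
    ((hR.differentiableAt two_ne_zero).hasDerivAt.fun_mul hΘ.hasDerivAt_deriv).fun_neg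
    (hΛ.hasDerivAt_deriv.fun_sub (hΘ.hasDerivAt_deriv.const_mul μ))
  rw [show pd1 (pd1 (bourPatch μ R Λ Θ)) s t = deriv (fun u => pd1 (bourPatch μ R Λ Θ) u t) s
    from rfl, hpd1.deriv_eq, h.deriv]
  congr 1
  simp only [Prod.mk.injEq, and_true]
  constructor <;> ring

end bourPatch

/-- The vectors are the frame components of `X_ss`, `X_tt`, `X_st` and `X_s × X_t`; the primes
mark the derivatives of `R`, `Λ`, `Θ`, `U`. -/
theorem bour_frame_curvature {μ r r' r'' l' l'' θ' θ'' u u' u'' : ℝ} (hu : u ≠ 0)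
    (hQ : r ^ 2 + μ ^ 2 = u ^ 2) (hθ : θ' * u ^ 2 = μ * l')
    (hm : r' ^ 2 * u ^ 2 + r ^ 2 * l' ^ 2 = u ^ 2)
    (hm' : r' * r'' * u ^ 2 + r' ^ 2 * u * u' + r * r' * l' ^ 2 + r ^ 2 * l' * l'' = u * u')
    (hu' : r * r' = u * u') (hu'' : r' ^ 2 + r * r'' = u' ^ 2 + u * u'') :
    (dot3 (r'' - r * θ' ^ 2, -(2 * r' * θ' + r * θ''), l'' - μ * θ'') (-(r * l'), -(μ * r'), r * r')
        * dot3 (-r, 0, 0) (-(r * l'), -(μ * r'), r * r')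
      - dot3 (r * θ', r', 0) (-(r * l'), -(μ * r'), r * r') ^ 2)
      / dot3 (-(r * l'), -(μ * r'), r * r') (-(r * l'), -(μ * r'), r * r') ^ 2 = -u'' / u := by
  have hu2 : u ^ 2 ≠ 0 := pow_ne_zero 2 hu
  have hA : θ' * (r ^ 2 * l') = μ * (1 - r' ^ 2) := mul_right_cancel₀ hu2 <| by
    linear_combination (r ^ 2 * l') * hθ + μ * hm
  have hnormal : dot3 (-(r * l'), -(μ * r'), r * r') (-(r * l'), -(μ * r'), r * r') = u ^ 2 := by
    simp only [dot3]
    linear_combination hm + r' ^ 2 * hQ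
  have hN : dot3 (-r, 0, 0) (-(r * l'), -(μ * r'), r * r') = r ^ 2 * l' := by
    simp only [dot3]
    ring
  have hM : dot3 (r * θ', r', 0) (-(r * l'), -(μ * r'), r * r') = -μ := mul_right_cancel₀ hu2 <| by
    simp only [dot3]
    linear_combination (-(r ^ 2 * l')) * hθ - μ * hm
  have hL : dot3 (r'' - r * θ' ^ 2, -(2 * r' * θ' + r * θ''), l'' - μ * θ'')
      (-(r * l'), -(μ * r'), r * r') * (r ^ 2 * l') - μ ^ 2 = -(u'' * u ^ 3) := by
    simp only [dot3]
    linear_combination r * r' * hm' + (θ' * r ^ 2 * l' + μ * (1 - r' ^ 2) + 2 * μ * r' ^ 2) * hA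
      + (-(r * r'') - r' ^ 2) * hm + (u * u' + r * r' ^ 3) * hu' - r' ^ 4 * hQ - u ^ 2 * hu''
  rw [hnormal, hN, hM, neg_sq, hL]
  field_simp

section Profile

variable {R U : ℝ → ℝ} {x : ℝ}

theorem mul_deriv_eq_of_sq_add_const {c : ℝ} (hR : DifferentiableAt ℝ R x)
    (hU : DifferentiableAt ℝ U x) (h : ∀ᶠ y in 𝓝 x, R y ^ 2 + c = U y ^ 2) :
    R x * deriv R x = U x * deriv U x := by
  have hl := (hR.hasDerivAt.fun_pow 2).add_const c
  have hr := hU.hasDerivAt.fun_pow 2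
  have := hl.unique (hr.congr_of_eventuallyEq h)
  push_cast at this
  linear_combination this / 2

theorem deriv_sq_add_mul_deriv_deriv_eq {c : ℝ} (hR : ContDiffAt ℝ 2 R x)
    (hU : ContDiffAt ℝ 2 U x) (h : ∀ᶠ y in 𝓝 x, R y ^ 2 + c = U y ^ 2) :
    deriv R x ^ 2 + R x * deriv (deriv R) x = deriv U x ^ 2 + U x * deriv (deriv U) x := by
  have h' : ∀ᶠ y in 𝓝 x, R y * deriv R y = U y * deriv U y := by
    filter_upwards [hR.eventually_differentiableAt, hU.eventually_differentiableAt,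
      h.eventually_nhds] with y hRy hUy hy
    exact mul_deriv_eq_of_sq_add_const hRy hUy hy
  have hl := (hR.differentiableAt two_ne_zero).hasDerivAt.fun_mul hR.hasDerivAt_deriv
  have hr := (hU.differentiableAt two_ne_zero).hasDerivAt.fun_mul hU.hasDerivAt_deriv
  linear_combination hl.unique (hr.congr_of_eventuallyEq h')

theorem bour_metric_deriv {Λ : ℝ → ℝ} (hR : ContDiffAt ℝ 2 R x) (hΛ : ContDiffAt ℝ 2 Λ x)
    (hU : DifferentiableAt ℝ U x)
    (hm : ∀ᶠ y in 𝓝 x, deriv R y ^ 2 * U y ^ 2 + R y ^ 2 * deriv Λ y ^ 2 = U y ^ 2) :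
    deriv R x * deriv (deriv R) x * U x ^ 2 + deriv R x ^ 2 * U x * deriv U x
        + R x * deriv R x * deriv Λ x ^ 2 + R x ^ 2 * deriv Λ x * deriv (deriv Λ) x
      = U x * deriv U x := by
  have hR' := (hR.differentiableAt two_ne_zero).hasDerivAt
  have hl := ((hR.hasDerivAt_deriv.fun_pow 2).fun_mul (hU.hasDerivAt.fun_pow 2)).fun_add
    ((hR'.fun_pow 2).fun_mul (hΛ.hasDerivAt_deriv.fun_pow 2))
  have hr := hU.hasDerivAt.fun_pow 2
  have := hl.unique (hr.congr_of_eventuallyEq hm)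
  push_cast at this
  linear_combination this / 2

end Profile

theorem bour_gauss_curvature_general
    (I : Set ℝ) (hIopen : IsOpen I) (μ : ℝ)
    (R Λ Θ U : ℝ → ℝ)
    (hRC : ContDiffOn ℝ 2 R I) (hΛC : ContDiffOn ℝ 2 Λ I)
    (hΘC : ContDiffOn ℝ 2 Θ I) (hUC : ContDiffOn ℝ 2 U I)
    (hUpos : ∀ s ∈ I, 0 < U s)
    (hRU : ∀ s ∈ I, (R s) ^ 2 = (U s) ^ 2 - μ ^ 2)
    (hmetric : ∀ s ∈ I,
      (deriv R s) ^ 2 + ((R s) ^ 2 / ((R s) ^ 2 + μ ^ 2)) * (deriv Λ s) ^ 2 = 1)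
    (hΘ' : ∀ s ∈ I, deriv Θ s = (μ / ((R s) ^ 2 + μ ^ 2)) * deriv Λ s)
    (X : ℝ → ℝ → ℝ × ℝ × ℝ)
    (hX : ∀ s t, X s t =
      (R s * Real.cos (t - Θ s), R s * Real.sin (t - Θ s), Λ s + μ * (t - Θ s))) :
    ∀ s ∈ I, ∀ t : ℝ, gauss X s t = -(deriv (deriv U) s) / U s := by
  intro s hs t
  have hXB : X = bourPatch μ R Λ Θ := funext₂ fun s t => by simp [hX, bourPatch, rotZ]
  have hI : ∀ᶠ x in 𝓝 s, x ∈ I := hIopen.mem_nhds hs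
  have hQ : ∀ x ∈ I, R x ^ 2 + μ ^ 2 = U x ^ 2 := fun x hx => by linarith [hRU x hx]
  have hU : U s ≠ 0 := (hUpos s hs).ne'
  have hm : ∀ x ∈ I, deriv R x ^ 2 * U x ^ 2 + R x ^ 2 * deriv Λ x ^ 2 = U x ^ 2 := by
    intro x hx
    have h := hmetric x hx
    rw [hQ x hx] at h
    field_simp [(hUpos x hx).ne'] at h
    linear_combination h
  have hθ : deriv Θ s * U s ^ 2 = μ * deriv Λ s := by
    rw [hΘ' s hs, hQ s hs]
    field_simp
  have hR := hRC.contDiffAt hI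
  have hΛ := hΛC.contDiffAt hI
  have hΘ := hΘC.contDiffAt hI
  have hU2 := hUC.contDiffAt hI
  have hR1 := hR.differentiableAt two_ne_zero
  have hΛ1 := hΛ.differentiableAt two_ne_zero
  have hΘ1 := hΘ.differentiableAt two_ne_zero
  have hU1 := hU2.differentiableAt two_ne_zero
  rw [hXB, gauss_eq_cross3, cross3_pd1_pd2_bourPatch hR1 hΛ1 hΘ1, pd1_pd1_bourPatch hR hΛ hΘ,
    pd2_pd1_bourPatch hR1 hΛ1 hΘ1, pd2_pd2_bourPatch]
  simp only [dot3_rotZ]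
  exact bour_frame_curvature hU (hQ s hs) hθ (hm s hs)
    (bour_metric_deriv hR hΛ hU1 (hI.mono hm))
    (mul_deriv_eq_of_sq_add_const hR1 hU1 (hI.mono hQ))
    (deriv_sq_add_mul_deriv_deriv_eq hR hU2 (hI.mono hQ))

/-- The Gaussian curvature of Bour's helicoidal patch equals
`K = −U''/U`. -/
theorem bour_gauss_curvature
    (I : Set ℝ) (hIopen : IsOpen I) (hIconn : I.OrdConnected) (μ : ℝ)
    (R Λ Θ U : ℝ → ℝ)
    (hRC : ContDiffOn ℝ 2 R I) (hΛC : ContDiffOn ℝ 2 Λ I)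
    (hΘC : ContDiffOn ℝ 2 Θ I) (hUC : ContDiffOn ℝ 2 U I)
    (hRpos : ∀ s ∈ I, 0 < R s) (hUpos : ∀ s ∈ I, 0 < U s)
    (hRU : ∀ s ∈ I, (R s) ^ 2 = (U s) ^ 2 - μ ^ 2)
    (hmetric : ∀ s ∈ I,
      (deriv R s) ^ 2 + ((R s) ^ 2 / ((R s) ^ 2 + μ ^ 2)) * (deriv Λ s) ^ 2 = 1)
    (hΘ' : ∀ s ∈ I, deriv Θ s = (μ / ((R s) ^ 2 + μ ^ 2)) * deriv Λ s)
    (X : ℝ → ℝ → ℝ × ℝ × ℝ)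
    (hX : ∀ s t, X s t =
      (R s * Real.cos (t - Θ s), R s * Real.sin (t - Θ s), Λ s + μ * (t - Θ s)))
    (hcross : ∀ s ∈ I, ∀ t : ℝ, cross3 (pd1 X s t) (pd2 X s t) ≠ 0) :
    ∀ s ∈ I, ∀ t : ℝ, gauss X s t = -(deriv (deriv U) s) / U s :=
  bour_gauss_curvature_general I hIopen μ R Λ Θ U hRC hΛC hΘC hUC hUpos hRU hmetric hΘ' X hX
end
end

section
/- Let h, c ∈ ℝ and let I ⊆ (0, ∞) be an open interval on which U² − h² > 0, U² + c > 0, and P(U) := U⁴ + (c − 1 − h²)·U² − h²·c ≥ 0. Let R, Λ, Θ : I → ℝ be C¹ functions with R(U) = √(U² − h²), Λ'(U) = (U/(U² − h²))·√(P(U)), and Θ'(U) = (h/U²)·Λ'(U). Define X(U,t) = (R(U)·cos(t − Θ(U)), R(U)·sin(t − Θ(U)), Λ(U) + h·(t − Θ(U))). Then at every point of I × ℝ the squared angle function equals 1/(U² + c), i.e., ((X_U × X_t)·e₃)² = ‖X_U × X_t‖²/(U² + c). -/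
open Real

noncomputable section

/-! With `φ = t - Θ(U)` one has `X_t = (-R sin φ, R cos φ, h)` and
`X_U = R' (cos φ, sin φ, 0) + Λ' e₃ - Θ' X_t`, so `Θ'` drops out of `X_U × X_t`: its third
component is `R R' = U` and its squared length is `h² R'² + Λ'² R² + U²`. With `R' = U / R` and the
prescribed `Λ'` the latter is `U² (U² + c)`, and `n₃² = U² / ‖X_U × X_t‖²`. -/

lemma dot3_self_nonneg (v : ℝ × ℝ × ℝ) : 0 ≤ dot3 v v := by
  unfold dot3
  exact add_nonneg (add_nonneg (mul_self_nonneg _) (mul_self_nonneg _)) (mul_self_nonneg _)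

lemma dot3_e3 (v : ℝ × ℝ × ℝ) : dot3 v e3 = v.2.2 := by
  simp [dot3, e3]

lemma angleFun_sq (X : ℝ → ℝ → ℝ × ℝ × ℝ) (s t : ℝ) :
    angleFun X s t ^ 2 =
      dot3 (cross3 (pd1 X s t) (pd2 X s t)) e3 ^ 2 /
        dot3 (cross3 (pd1 X s t) (pd2 X s t)) (cross3 (pd1 X s t) (pd2 X s t)) := by
  simp only [angleFun, unitNormal, dot3_e3, Prod.smul_snd, smul_eq_mul, mul_pow, inv_pow,
    Real.sq_sqrt (dot3_self_nonneg _)]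
  ring

def helicoidalPatch (h : ℝ) (R Λ Θ : ℝ → ℝ) (U t : ℝ) : ℝ × ℝ × ℝ :=
  (R U * cos (t - Θ U), R U * sin (t - Θ U), Λ U + h * (t - Θ U))

section HelicoidalPatch

variable {h : ℝ} {R Λ Θ : ℝ → ℝ} {U R' L T : ℝ}

lemma pd1_helicoidalPatch (hR : HasDerivAt R R' U) (hΛ : HasDerivAt Λ L U)
    (hΘ : HasDerivAt Θ T U) (t : ℝ) :
    pd1 (helicoidalPatch h R Λ Θ) U t =
      (R' * cos (t - Θ U) + R U * T * sin (t - Θ U),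
        R' * sin (t - Θ U) - R U * T * cos (t - Θ U), L - h * T) := by
  have hφ : HasDerivAt (fun u => t - Θ u) (-T) U := hΘ.const_sub t
  have hcos := hR.mul ((hasDerivAt_cos _).comp U hφ)
  have hsin := hR.mul ((hasDerivAt_sin _).comp U hφ)
  have hz := hΛ.add (hφ.const_mul h)
  refine (hcos.prodMk (hsin.prodMk hz)).deriv.trans ?_
  simp only [Prod.mk.injEq, Function.comp_apply]
  refine ⟨by ring, by ring, by ring⟩

lemma pd2_helicoidalPatch (t : ℝ) :
    pd2 (helicoidalPatch h R Λ Θ) U t =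
      (-(R U * sin (t - Θ U)), R U * cos (t - Θ U), h) := by
  have hφ : HasDerivAt (fun v => v - Θ U) 1 t := (hasDerivAt_id t).sub_const _
  have hcos := ((hasDerivAt_cos _).comp t hφ).const_mul (R U)
  have hsin := ((hasDerivAt_sin _).comp t hφ).const_mul (R U)
  have hz := (hφ.const_mul h).const_add (Λ U)
  refine (hcos.prodMk (hsin.prodMk hz)).deriv.trans ?_
  simp only [Prod.mk.injEq]
  refine ⟨by ring, by ring, by ring⟩

lemma cross3_pd_helicoidalPatch (hR : HasDerivAt R R' U) (hΛ : HasDerivAt Λ L U)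
    (hΘ : HasDerivAt Θ T U) (t : ℝ) :
    cross3 (pd1 (helicoidalPatch h R Λ Θ) U t) (pd2 (helicoidalPatch h R Λ Θ) U t) =
      (h * R' * sin (t - Θ U) - L * R U * cos (t - Θ U),
        -(L * R U * sin (t - Θ U)) - h * R' * cos (t - Θ U), R U * R') := by
  rw [pd1_helicoidalPatch hR hΛ hΘ, pd2_helicoidalPatch]
  have htrig := sin_sq_add_cos_sq (t - Θ U)
  simp only [cross3, Prod.mk.injEq]
  refine ⟨by ring, by ring, by linear_combination R U * R' * htrig⟩

lemma dot3_self_cross3_pd_helicoidalPatch (hR : HasDerivAt R R' U)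
    (hΛ : HasDerivAt Λ L U) (hΘ : HasDerivAt Θ T U) (t : ℝ) :
    dot3 (cross3 (pd1 (helicoidalPatch h R Λ Θ) U t) (pd2 (helicoidalPatch h R Λ Θ) U t))
        (cross3 (pd1 (helicoidalPatch h R Λ Θ) U t) (pd2 (helicoidalPatch h R Λ Θ) U t)) =
      (h * R') ^ 2 + (L * R U) ^ 2 + (R U * R') ^ 2 := by
  rw [cross3_pd_helicoidalPatch hR hΛ hΘ]
  simp only [dot3]
  linear_combination ((h * R') ^ 2 + (L * R U) ^ 2) * sin_sq_add_cos_sq (t - Θ U)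

end HelicoidalPatch

lemma hasDerivAt_sqrt_sq_sub_sq {h U : ℝ} (hU : 0 < U ^ 2 - h ^ 2) :
    HasDerivAt (fun u => √(u ^ 2 - h ^ 2)) (U / √(U ^ 2 - h ^ 2)) U := by
  refine (((hasDerivAt_pow 2 U).sub_const (h ^ 2)).sqrt hU.ne').congr_deriv ?_
  field_simp
  norm_num

/-- Rests on `U⁴ + (c - 1 - h²) U² - h² c = (U² - h²)(U² + c) - U²`. -/
lemma helicoidal_normal_sq_eq {h c U : ℝ} (hU : 0 < U ^ 2 - h ^ 2)
    (hP : 0 ≤ U ^ 4 + (c - 1 - h ^ 2) * U ^ 2 - h ^ 2 * c) :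
    (h * (U / √(U ^ 2 - h ^ 2))) ^ 2 +
        (U / (U ^ 2 - h ^ 2) * √(U ^ 4 + (c - 1 - h ^ 2) * U ^ 2 - h ^ 2 * c) *
          √(U ^ 2 - h ^ 2)) ^ 2 +
        (√(U ^ 2 - h ^ 2) * (U / √(U ^ 2 - h ^ 2))) ^ 2 =
      U ^ 2 * (U ^ 2 + c) := by
  simp only [mul_pow, div_pow, Real.sq_sqrt hU.le, Real.sq_sqrt hP]
  field_simp
  ring

theorem helicoidal_angle_function_general
    (h c : ℝ) (I : Set ℝ) (hIopen : IsOpen I)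
    (hIpos : I ⊆ Set.Ioi (0 : ℝ))
    (hUh : ∀ U ∈ I, 0 < U ^ 2 - h ^ 2)
    (hUc : ∀ U ∈ I, 0 < U ^ 2 + c)
    (hP : ∀ U ∈ I, 0 ≤ U ^ 4 + (c - 1 - h ^ 2) * U ^ 2 - h ^ 2 * c)
    (R Λ Θ : ℝ → ℝ)
    (hΛC : ContDiffOn ℝ 1 Λ I) (hΘC : ContDiffOn ℝ 1 Θ I)
    (hR : ∀ U ∈ I, R U = Real.sqrt (U ^ 2 - h ^ 2))
    (hΛ' : ∀ U ∈ I, deriv Λ U =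
      (U / (U ^ 2 - h ^ 2)) * Real.sqrt (U ^ 4 + (c - 1 - h ^ 2) * U ^ 2 - h ^ 2 * c))
    (X : ℝ → ℝ → ℝ × ℝ × ℝ)
    (hX : ∀ U t, X U t =
      (R U * Real.cos (t - Θ U), R U * Real.sin (t - Θ U), Λ U + h * (t - Θ U))) :
    ∀ U ∈ I, ∀ t : ℝ,
      (angleFun X U t) ^ 2 = 1 / (U ^ 2 + c) ∧
      (dot3 (cross3 (pd1 X U t) (pd2 X U t)) e3) ^ 2 =
        dot3 (cross3 (pd1 X U t) (pd2 X U t)) (cross3 (pd1 X U t) (pd2 X U t))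
          / (U ^ 2 + c) := by
  intro U hU t
  obtain rfl : X = helicoidalPatch h R Λ Θ := funext fun U => funext (hX U)
  clear hX
  have hI : I ∈ nhds U := hIopen.mem_nhds hU
  have hRd : HasDerivAt R (U / √(U ^ 2 - h ^ 2)) U :=
    (hasDerivAt_sqrt_sq_sub_sq (hUh U hU)).congr_of_eventuallyEq
      (Filter.eventuallyEq_of_mem hI hR)
  have hΛd := ((hΛC.differentiableOn one_ne_zero).differentiableAt hI).hasDerivAt
  have hΘd := ((hΘC.differentiableOn one_ne_zero).differentiableAt hI).hasDerivAt
  have hN₃ : dot3 (cross3 (pd1 (helicoidalPatch h R Λ Θ) U t)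
      (pd2 (helicoidalPatch h R Λ Θ) U t)) e3 = U := by
    rw [dot3_e3, cross3_pd_helicoidalPatch hRd hΛd hΘd, hR U hU]
    exact mul_div_cancel₀ U (Real.sqrt_pos.2 (hUh U hU)).ne'
  have hNsq := dot3_self_cross3_pd_helicoidalPatch (h := h) hRd hΛd hΘd t
  rw [hR U hU, hΛ' U hU, helicoidal_normal_sq_eq (hUh U hU) (hP U hU)] at hNsq
  have hU0 : U ≠ 0 := (hIpos hU).ne'
  have hc0 : U ^ 2 + c ≠ 0 := (hUc U hU).ne'
  constructor
  · rw [angleFun_sq, hN₃, hNsq]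
    field_simp
  · rw [hN₃, hNsq]
    field_simp

/-- On the helicoidal patch `H^h_c` the squared angle function equals
`1/(U² + c)`, i.e. `((X_U × X_t)·e₃)² = ‖X_U × X_t‖²/(U² + c)`. -/
theorem helicoidal_angle_function
    (h c : ℝ) (I : Set ℝ) (hIopen : IsOpen I) (hIconn : I.OrdConnected)
    (hIpos : I ⊆ Set.Ioi (0 : ℝ))
    (hUh : ∀ U ∈ I, 0 < U ^ 2 - h ^ 2)
    (hUc : ∀ U ∈ I, 0 < U ^ 2 + c)
    (hP : ∀ U ∈ I, 0 ≤ U ^ 4 + (c - 1 - h ^ 2) * U ^ 2 - h ^ 2 * c)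
    (R Λ Θ : ℝ → ℝ)
    (hRC : ContDiffOn ℝ 1 R I) (hΛC : ContDiffOn ℝ 1 Λ I) (hΘC : ContDiffOn ℝ 1 Θ I)
    (hR : ∀ U ∈ I, R U = Real.sqrt (U ^ 2 - h ^ 2))
    (hΛ' : ∀ U ∈ I, deriv Λ U =
      (U / (U ^ 2 - h ^ 2)) * Real.sqrt (U ^ 4 + (c - 1 - h ^ 2) * U ^ 2 - h ^ 2 * c))
    (hΘ' : ∀ U ∈ I, deriv Θ U = (h / U ^ 2) * deriv Λ U)
    (X : ℝ → ℝ → ℝ × ℝ × ℝ)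
    (hX : ∀ U t, X U t =
      (R U * Real.cos (t - Θ U), R U * Real.sin (t - Θ U), Λ U + h * (t - Θ U))) :
    ∀ U ∈ I, ∀ t : ℝ,
      (angleFun X U t) ^ 2 = 1 / (U ^ 2 + c) ∧
      (dot3 (cross3 (pd1 X U t) (pd2 X U t)) e3) ^ 2 =
        dot3 (cross3 (pd1 X U t) (pd2 X U t)) (cross3 (pd1 X U t) (pd2 X U t))
          / (U ^ 2 + c) :=
  helicoidal_angle_function_general h c I hIopen hIpos hUh hUc hP R Λ Θ hΛC hΘC hR hΛ' X hX
end
end
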